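/- arXiv:2502.16768 — 3 statements merged into one kernel-verified Lean document; each statement's English description precedes it below -/
import Mathlib

section
/- For any positive integers Y₀, B₀, α, β, γ and any p ∈ (0,1], the proportion of yellow balls X_n = Y_n/(Y_n + B_n) in the mixed Friedman–Pólya urn converges almost surely to 1/2 as n → ∞. -/
/-!
Write `S n = Y n + B n`. Conditioning first on the draw and then on the independent choice of
scheme gives the drift `E[X (n+1) | 𝔉 n] = X n + p β (1 - 2 X n) / (S n + α + β)`, while
`S n ≥ n + 1` bounds the steps by `|X (n+1) - X n| ≤ (α + β + γ) / (n + 1)`. Hence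
`V n = (X n - 1/2)²` satisfies
`E[V (n+1) | 𝔉 n] ≤ V n - 4 p β V n / (S n + α + β) + ((α + β + γ) / (n + 1))²`,
and the Robbins–Siegmund theorem shows that `V n` converges almost surely and that
`∑ V n / (S n + α + β) < ∞`. Since `S n` grows at most linearly, `∑ 1 / (S n + α + β) = ∞`,
so the limit of `V n` is `0`.
-/

open MeasureTheory ProbabilityTheory Filter

/-- The proportion of "yellow" balls at time `n`: `X n = Y n / (Y n + B n)`. -/
noncomputable def urnX {Ω : Type*} (Y B : ℕ → Ω → ℕ) (n : ℕ) (ω : Ω) : ℝ :=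
  (Y n ω : ℝ) / ((Y n ω : ℝ) + (B n ω : ℝ))

/-- The mixed Friedman–Pólya urn scheme: with probability `p` balls are replaced
according to Friedman's scheme (`a` of the drawn colour, `b` of the opposite colour),
and with probability `1 - p` according to Pólya's scheme (`g` of the drawn colour). -/
structure MixedUrn {Ω : Type*} [m0 : MeasurableSpace Ω] (μ : Measure Ω)
    (Y0 B0 a b g : ℕ) (p : ℝ) where
  /-- the filtration -/
  F : Filtration ℕ m0
  /-- `ξ n = 1` iff Friedman's scheme is used at draw `n` -/
  ξ : ℕ → Ω → ℕ
  /-- `ζ n = 1` iff a yellow ball is drawn at draw `n` -/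
  ζ : ℕ → Ω → ℕ
  /-- number of yellow balls -/
  Y : ℕ → Ω → ℕ
  /-- number of blue balls -/
  B : ℕ → Ω → ℕ
  xi_meas : ∀ n, Measurable (ξ n)
  xi_binary : ∀ n ω, ξ n ω ≤ 1
  zeta_binary : ∀ n ω, ζ n ω ≤ 1
  zeta_adapted : ∀ n, 1 ≤ n → Measurable[F n] (ζ n)
  Y_adapted : ∀ n, Measurable[F n] (Y n)
  B_adapted : ∀ n, Measurable[F n] (B n)
  Y_init : ∀ ω, Y 0 ω = Y0
  B_init : ∀ ω, B 0 ω = B0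
  /-- the `ξ n` are Bernoulli(`p`) -/
  xi_bernoulli : ∀ n, 1 ≤ n → μ {ω | ξ n ω = 1} = ENNReal.ofReal p
  /-- the `ξ n` are independent of each other -/
  xi_iid : iIndepFun ξ μ
  /-- `ξ n` is independent of `𝔉 (n-1)` and of `ζ n` -/
  xi_indep : ∀ n, 1 ≤ n →
    Indep (MeasurableSpace.comap (ξ n) inferInstance)
      ((F (n - 1)) ⊔ MeasurableSpace.comap (ζ n) inferInstance) μ
  /-- `P(ζ n = 1 ∣ 𝔉 (n-1)) = X (n-1)` -/
  zeta_cond : ∀ n, 1 ≤ n →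
    μ[Set.indicator {ω | ζ n ω = 1} (fun _ => (1 : ℝ)) | F (n - 1)]
      =ᵐ[μ] urnX Y B (n - 1)
  Y_dyn : ∀ n, 1 ≤ n → ∀ ω,
    Y n ω = Y (n - 1) ω
      + a * (if ξ n ω = 1 ∧ ζ n ω = 1 then 1 else 0)
      + b * (if ξ n ω = 1 ∧ ζ n ω = 0 then 1 else 0)
      + g * (if ξ n ω = 0 ∧ ζ n ω = 1 then 1 else 0)
  B_dyn : ∀ n, 1 ≤ n → ∀ ω,
    B n ω = B (n - 1) ω
      + a * (if ξ n ω = 1 ∧ ζ n ω = 0 then 1 else 0)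
      + b * (if ξ n ω = 1 ∧ ζ n ω = 1 then 1 else 0)
      + g * (if ξ n ω = 0 ∧ ζ n ω = 0 then 1 else 0)

open Topology

lemma eq_zero_of_tendsto_of_summable_mul {u w : ℕ → ℝ} {l : ℝ} (hu : Tendsto u atTop (𝓝 l))
    (hw0 : ∀ n, 0 ≤ w n) (hw : ¬ Summable w) (huw : Summable fun n => u n * w n) : l = 0 := by
  by_contra hl
  have hl' : 0 < |l| / 2 := by positivity
  have hlarge : ∀ᶠ n in atTop, |l| / 2 ≤ |u n| :=
    hu.abs.eventually (eventually_ge_nhds (by linarith))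
  refine hw ((summable_mul_left_iff hl'.ne').1 (huw.abs.of_norm_bounded_eventually_nat ?_))
  filter_upwards [hlarge] with n hn
  rw [Real.norm_of_nonneg (mul_nonneg hl'.le (hw0 n)), abs_mul, abs_of_nonneg (hw0 n)]
  exact mul_le_mul_of_nonneg_right hn (hw0 n)

lemma not_summable_inv_of_le_mul_succ {f : ℕ → ℝ} {M : ℝ} (hf : ∀ n, 0 < f n)
    (hM : ∀ n, f n ≤ M * (n + 1)) : ¬ Summable fun n => (f n)⁻¹ := by
  intro hs
  refine Real.not_summable_natCast_inv ((summable_nat_add_iff 1).1 ?_)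
  refine (hs.mul_left M).of_nonneg_of_le (fun n => by positivity) fun n => ?_
  rw [← div_eq_mul_inv, le_div_iff₀ (hf n), Nat.cast_add_one, inv_mul_eq_div,
    div_le_iff₀ (by positivity)]
  exact hM n

lemma tendsto_of_tendsto_sub_sq_zero {u : ℕ → ℝ} {c : ℝ}
    (h : Tendsto (fun n => (u n - c) ^ 2) atTop (𝓝 0)) : Tendsto u atTop (𝓝 c) := by
  have habs := (Real.continuous_sqrt.tendsto 0).comp h
  simp only [Function.comp_def, Real.sqrt_sq_eq_abs, Real.sqrt_zero] at habs
  simpa using ((tendsto_zero_iff_abs_tendsto_zero _).2 habs).add_const c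

lemma abs_div_add_sub_div_le {y s u v : ℝ} (hy : 0 ≤ y) (hys : y ≤ s) (hs : 0 < s)
    (hu : 0 ≤ u) (huv : u ≤ v) : |(y + u) / (s + v) - y / s| ≤ v / s := by
  have hsv : 0 < s + v := by linarith
  have hnum : |u * s - v * y| ≤ v * s := by
    rw [abs_le]
    constructor <;>
      nlinarith [mul_nonneg hy hu, mul_nonneg hs.le hu, mul_nonneg (hu.trans huv) hy]
  have hdiff : (y + u) / (s + v) - y / s = (u * s - v * y) / (s + v) / s := by
    field_simp
    ring
  rw [hdiff, abs_div, abs_div, abs_of_pos hsv, abs_of_pos hs]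
  gcongr
  rw [div_le_iff₀ hsv]
  nlinarith [mul_nonneg (hu.trans huv) (hu.trans huv)]

lemma natCast_eq_indicator {Ω : Type*} {e : Ω → ℕ} (he : ∀ ω, e ω ≤ 1) :
    (fun ω => (e ω : ℝ)) = Set.indicator {ω | e ω = 1} fun _ => 1 := by
  ext ω
  rcases Nat.le_one_iff_eq_zero_or_eq_one.1 (he ω) with h | h <;> simp [h]

lemma stronglyMeasurable_comap_natCast {Ω : Type*} (e : Ω → ℕ) :
    StronglyMeasurable[MeasurableSpace.comap e inferInstance] fun ω => (e ω : ℝ) :=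
  ((measurable_of_countable Nat.cast).comp (comap_measurable e)).stronglyMeasurable

section Binary

variable {Ω : Type*} [MeasurableSpace Ω] {μ : Measure Ω} {e : Ω → ℕ}

lemma aestronglyMeasurable_natCast (he : Measurable e) :
    AEStronglyMeasurable (fun ω => (e ω : ℝ)) μ :=
  ((measurable_of_countable Nat.cast).comp he).aestronglyMeasurable

lemma integrable_natCast_of_le_one [IsFiniteMeasure μ] (he : Measurable e)
    (he1 : ∀ ω, e ω ≤ 1) : Integrable (fun ω => (e ω : ℝ)) μ :=
  .of_bound (aestronglyMeasurable_natCast he) 1 (.of_forall fun ω => by simpa using he1 ω)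

lemma MeasureTheory.Integrable.mul_natCast_of_le_one {f : Ω → ℝ} (hf : Integrable f μ)
    (he : Measurable e) (he1 : ∀ ω, e ω ≤ 1) : Integrable (f * fun ω => (e ω : ℝ)) μ :=
  hf.mul_bdd (c := 1) (aestronglyMeasurable_natCast he) (.of_forall fun ω => by simpa using he1 ω)

end Binary

section CondExp

variable {Ω : Type*} {m m' mξ m0 : MeasurableSpace Ω} {μ : Measure Ω}

lemma condExp_mul_of_indep [IsFiniteMeasure μ] (hm : m ≤ m') (hm' : m' ≤ m0) (hmξ : mξ ≤ m0)
    (hind : Indep mξ m' μ) {f g : Ω → ℝ} (hf : StronglyMeasurable[m'] f)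
    (hg : StronglyMeasurable[mξ] g) (hfg : Integrable (f * g) μ) (hgi : Integrable g μ) :
    μ[f * g | m] =ᵐ[μ] fun ω => μ[g] * μ[f | m] ω := by
  have hpull : μ[f * g | m'] =ᵐ[μ] fun ω => μ[g] * f ω := by
    filter_upwards [condExp_mul_of_stronglyMeasurable_left hf hfg hgi,
      condExp_indep_eq hmξ hm' hg hind] with ω h1 h2
    rw [h1, Pi.mul_apply, h2, mul_comm]
  calc μ[f * g | m] =ᵐ[μ] μ[μ[f * g | m'] | m] := (condExp_condExp_of_le hm hm').symm
    _ =ᵐ[μ] μ[fun ω => μ[g] * f ω | m] := condExp_congr_ae hpull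
    _ =ᵐ[μ] fun ω => μ[g] * μ[f | m] ω := condExp_smul (μ[g]) f m

lemma condExp_add_mul_of_stronglyMeasurable {u v g : Ω → ℝ} (hm : m ≤ m0)
    [SigmaFinite (μ.trim hm)] (hu : StronglyMeasurable[m] u) (hv : StronglyMeasurable[m] v)
    (hui : Integrable u μ) (hvg : Integrable (v * g) μ) (hg : Integrable g μ) :
    μ[u + v * g | m] =ᵐ[μ] u + v * μ[g | m] := by
  filter_upwards [condExp_add hui hvg m, condExp_mul_of_stronglyMeasurable_left hv hvg hg]
    with ω h1 h2
  rw [h1, Pi.add_apply, h2, condExp_of_stronglyMeasurable hm hu hui]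
  rfl

lemma condExp_sub_sq_le [IsFiniteMeasure μ] (hm : m ≤ m0) {x y d : Ω → ℝ} {c ε : ℝ}
    (hx : StronglyMeasurable[m] x) (hxi : Integrable x μ)
    (hx2 : Integrable (fun ω => (x ω - c) ^ 2) μ) (hy : AEStronglyMeasurable y μ)
    (hyx : ∀ ω, |y ω - x ω| ≤ ε) (hd : μ[y | m] =ᵐ[μ] x + d) :
    μ[fun ω => (y ω - c) ^ 2 | m] ≤ᵐ[μ]
      fun ω => (x ω - c) ^ 2 + 2 * (x ω - c) * d ω + ε ^ 2 := by
  set e := y - x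
  have he : AEStronglyMeasurable e μ := hy.sub (hx.mono hm).aestronglyMeasurable
  have hei : Integrable e μ := .of_bound he ε (.of_forall hyx)
  have he_sq (ω : Ω) : e ω ^ 2 ≤ ε ^ 2 := by
    simpa only [sq_abs] using pow_le_pow_left₀ (abs_nonneg (e ω)) (hyx ω) 2
  have he2 : Integrable (fun ω => e ω ^ 2) μ :=
    .of_bound (he.pow 2) (ε ^ 2) (.of_forall fun ω => by
      rw [Real.norm_of_nonneg (sq_nonneg _)]; exact he_sq ω)
  have hlin : Integrable ((fun ω => 2 * (x ω - c)) * e) μ :=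
    ((hxi.sub (integrable_const c)).const_mul 2).mul_bdd he (.of_forall hyx)
  have hdrift : μ[e | m] =ᵐ[μ] d := by
    filter_upwards [condExp_sub (hei.add hxi) hxi m, hd] with ω h1 h2
    simp only [e, sub_add_cancel] at h1
    rw [h1, Pi.sub_apply, h2, condExp_of_stronglyMeasurable hm hx hxi, Pi.add_apply,
      add_sub_cancel_left]
  have hsq : μ[fun ω => e ω ^ 2 | m] ≤ᵐ[μ] fun _ => ε ^ 2 := by
    simpa only [condExp_const hm] using
      condExp_mono he2 (integrable_const (ε ^ 2)) (.of_forall he_sq) (m := m)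
  have hsplit : (fun ω => (y ω - c) ^ 2)
      = (fun ω => (x ω - c) ^ 2) + (fun ω => 2 * (x ω - c)) * e + fun ω => e ω ^ 2 := by
    ext ω
    simp only [e, Pi.add_apply, Pi.mul_apply, Pi.sub_apply]
    ring
  have hA : StronglyMeasurable[m] fun ω => (x ω - c) ^ 2 :=
    (hx.sub stronglyMeasurable_const).pow 2
  have hB : StronglyMeasurable[m] fun ω => 2 * (x ω - c) :=
    stronglyMeasurable_const.mul (hx.sub stronglyMeasurable_const)
  rw [hsplit]
  filter_upwards [condExp_add (hx2.add hlin) he2 m,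
    condExp_add_mul_of_stronglyMeasurable hm hA hB hx2 hlin hei, hdrift, hsq]
    with ω h1 h2 h3 h4
  rw [h1, Pi.add_apply, h2, Pi.add_apply, Pi.mul_apply, h3]
  linarith

end CondExp

section Supermartingale

variable {Ω : Type*} {m0 : MeasurableSpace Ω} {μ : Measure Ω} [IsFiniteMeasure μ]
  {ℱ : Filtration ℕ m0}

lemma MeasureTheory.Supermartingale.exists_ae_tendsto_of_nonneg {f : ℕ → Ω → ℝ}
    (hf : Supermartingale f ℱ μ) (hf0 : ∀ n, 0 ≤ᵐ[μ] f n) :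
    ∀ᵐ ω ∂μ, ∃ c, Tendsto (fun n => f n ω) atTop (𝓝 c) := by
  have hbdd (n : ℕ) : eLpNorm ((-f) n) 1 μ ≤ (μ[f 0]).toNNReal := by
    have hn : eLpNorm (f n) 1 μ = ENNReal.ofReal (μ[f n]) := by
      rw [eLpNorm_one_eq_lintegral_enorm,
        ofReal_integral_eq_lintegral_ofReal (hf.integrable n) (hf0 n)]
      refine lintegral_congr_ae ?_
      filter_upwards [hf0 n] with ω hω
      exact Real.enorm_eq_ofReal hω
    rw [Pi.neg_apply, eLpNorm_neg, hn]
    exact ENNReal.ofReal_le_ofReal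
      (by simpa using hf.setIntegral_le (Nat.zero_le n) MeasurableSet.univ)
  filter_upwards [hf.neg.exists_ae_tendsto_of_bdd hbdd] with ω ⟨c, hc⟩
  exact ⟨-c, by simpa using hc.neg⟩

/-- Robbins–Siegmund: `V n + ∑_{j<n} D j + ∑_{j≥n} c j` is a nonnegative supermartingale. -/
theorem ae_tendsto_and_summable_of_condExp_le {V D : ℕ → Ω → ℝ} {c : ℕ → ℝ}
    (hV : StronglyAdapted ℱ V) (hD : StronglyAdapted ℱ D)
    (hVi : ∀ n, Integrable (V n) μ) (hDi : ∀ n, Integrable (D n) μ)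
    (hV0 : ∀ n ω, 0 ≤ V n ω) (hD0 : ∀ n ω, 0 ≤ D n ω) (hc0 : ∀ n, 0 ≤ c n)
    (hc : Summable c) (hstep : ∀ n, μ[V (n + 1) | ℱ n] ≤ᵐ[μ] fun ω => V n ω - D n ω + c n) :
    ∀ᵐ ω ∂μ, (∃ l, Tendsto (fun n => V n ω) atTop (𝓝 l)) ∧ Summable fun n => D n ω := by
  set R : ℕ → Ω → ℝ := fun n ω => ∑ j ∈ Finset.range n, D j ω + ∑' j, c (j + n)
  have hR {n k : ℕ} (hnk : n ≤ k + 1) : StronglyMeasurable[ℱ k] (R n) :=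
    (Finset.stronglyMeasurable_fun_sum _ fun j hj =>
      (hD j).mono (ℱ.mono (by simp at hj; omega))).add stronglyMeasurable_const
  have hRi (n : ℕ) : Integrable (R n) μ :=
    (integrable_finsetSum _ fun j _ => hDi j).add (integrable_const _)
  have hR_succ (n : ℕ) (ω : Ω) : R (n + 1) ω = R n ω + D n ω - c n := by
    have htail := ((summable_nat_add_iff n).2 hc).tsum_eq_zero_add
    simp only [zero_add, show ∀ j, j + 1 + n = j + (n + 1) from fun j => by omega] at htail
    simp only [R, Finset.sum_range_succ, htail]
    ring
  have hZ : Supermartingale (V + R) ℱ μ := by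
    refine supermartingale_nat (fun n => (hV n).add (hR n.le_succ))
      (fun n => (hVi n).add (hRi n)) fun n => ?_
    filter_upwards [condExp_add (hVi (n + 1)) (hRi (n + 1)) (ℱ n), hstep n] with ω h1 h2
    show μ[V (n + 1) + R (n + 1) | ℱ n] ω ≤ V n ω + R n ω
    rw [h1, Pi.add_apply, condExp_of_stronglyMeasurable (ℱ.le n) (hR le_rfl) (hRi (n + 1)),
      hR_succ]
    linarith
  have hsum_le (n : ℕ) (ω : Ω) : ∑ j ∈ Finset.range n, D j ω ≤ (V + R) n ω := by
    have : 0 ≤ ∑' j, c (j + n) := tsum_nonneg fun j => hc0 (j + n)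
    simp only [Pi.add_apply, R]
    linarith [hV0 n ω]
  filter_upwards [hZ.exists_ae_tendsto_of_nonneg fun n => .of_forall fun ω =>
    (Finset.sum_nonneg fun j _ => hD0 j ω).trans (hsum_le n ω)] with ω ⟨z, hz⟩
  obtain ⟨M, hM⟩ := hz.bddAbove_range
  have hDs : Summable fun n => D n ω :=
    summable_of_sum_range_le (hD0 · ω) fun n => (hsum_le n ω).trans (hM ⟨n, rfl⟩)
  refine ⟨⟨z - ∑' n, D n ω - 0, ?_⟩, hDs⟩
  have hV_eq : (fun n => V n ω)
      = fun n => (V + R) n ω - ∑ j ∈ Finset.range n, D j ω - ∑' j, c (j + n) := by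
    ext n
    simp only [Pi.add_apply, R]
    ring
  rw [hV_eq]
  exact (hz.sub hDs.hasSum.tendsto_sum_nat).sub (tendsto_sum_nat_add c)

end Supermartingale

namespace MixedUrn

variable {Ω : Type*} [m0 : MeasurableSpace Ω] {μ : Measure Ω} {Y0 B0 a b g : ℕ} {p : ℝ}
  (U : MixedUrn μ Y0 B0 a b g p)

def total (n : ℕ) (ω : Ω) : ℕ := U.Y n ω + U.B n ω

lemma total_succ (k : ℕ) (ω : Ω) :
    U.total (k + 1) ω = U.total k ω + if U.ξ (k + 1) ω = 1 then a + b else g := by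
  have hY := U.Y_dyn (k + 1) (Nat.le_add_left 1 k) ω
  have hB := U.B_dyn (k + 1) (Nat.le_add_left 1 k) ω
  have := U.xi_binary (k + 1) ω
  have := U.zeta_binary (k + 1) ω
  simp only [Nat.add_sub_cancel] at hY hB
  unfold total
  interval_cases U.ξ (k + 1) ω <;> interval_cases U.ζ (k + 1) ω <;> simp [hY, hB] <;> ring

lemma urnX_succ (k : ℕ) (ω : Ω) :
    urnX U.Y U.B (k + 1) ω = if U.ξ (k + 1) ω = 1
      then ((U.Y k ω : ℝ) + b + (a - b) * U.ζ (k + 1) ω) / ((U.Y k ω : ℝ) + U.B k ω + a + b)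
      else ((U.Y k ω : ℝ) + g * U.ζ (k + 1) ω) / ((U.Y k ω : ℝ) + U.B k ω + g) := by
  have hY := U.Y_dyn (k + 1) (Nat.le_add_left 1 k) ω
  have hB := U.B_dyn (k + 1) (Nat.le_add_left 1 k) ω
  have := U.xi_binary (k + 1) ω
  have := U.zeta_binary (k + 1) ω
  simp only [Nat.add_sub_cancel] at hY hB
  unfold urnX
  interval_cases U.ξ (k + 1) ω <;> interval_cases U.ζ (k + 1) ω <;> simp [hY, hB] <;> ring_nf

lemma add_le_total (hb : 0 < b) (hg : 0 < g) (n : ℕ) (ω : Ω) :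
    Y0 + B0 + n ≤ U.total n ω := by
  induction n with
  | zero => simp [total, U.Y_init, U.B_init]
  | succ k ih => rw [U.total_succ]; split_ifs <;> omega

lemma total_le (n : ℕ) (ω : Ω) : U.total n ω ≤ Y0 + B0 + n * (a + b + g) := by
  induction n with
  | zero => simp [total, U.Y_init, U.B_init]
  | succ k ih => rw [U.total_succ, add_one_mul]; split_ifs <;> omega

lemma stronglyMeasurable_state (φ : ℕ → ℕ → ℝ) (n : ℕ) :
    StronglyMeasurable[U.F n] fun ω => φ (U.Y n ω) (U.B n ω) :=
  ((measurable_of_countable (Function.uncurry φ)).comp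
    ((U.Y_adapted n).prodMk (U.B_adapted n))).stronglyMeasurable

/-- The composition at time `n` ranges over a finite set, so every function of it is bounded. -/
lemma integrable_state [IsFiniteMeasure μ] (φ : ℕ → ℕ → ℝ) (n : ℕ) :
    Integrable (fun ω => φ (U.Y n ω) (U.B n ω)) μ := by
  set N := Y0 + B0 + n * (a + b + g)
  refine .of_bound ((U.stronglyMeasurable_state φ n).mono (U.F.le n)).aestronglyMeasurable
    (∑ i ∈ Finset.range (N + 1), ∑ j ∈ Finset.range (N + 1), |φ i j|) (.of_forall fun ω => ?_)
  have hN := U.total_le n ω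
  have hY : U.Y n ω ∈ Finset.range (N + 1) := by simp only [total] at hN; simp; omega
  have hB : U.B n ω ∈ Finset.range (N + 1) := by simp only [total] at hN; simp; omega
  calc ‖φ (U.Y n ω) (U.B n ω)‖ ≤ ∑ j ∈ Finset.range (N + 1), |φ (U.Y n ω) j| :=
        Finset.single_le_sum (f := fun j => |φ (U.Y n ω) j|) (fun j _ => abs_nonneg _) hB
    _ ≤ _ := Finset.single_le_sum (f := fun i => ∑ j ∈ Finset.range (N + 1), |φ i j|)
        (fun i _ => Finset.sum_nonneg fun j _ => abs_nonneg _) hY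

lemma measurable_draw (k : ℕ) : Measurable (U.ζ (k + 1)) :=
  (U.zeta_adapted (k + 1) (Nat.le_add_left 1 k)).mono (U.F.le (k + 1)) le_rfl

lemma condExp_draw (k : ℕ) :
    μ[fun ω => (U.ζ (k + 1) ω : ℝ) | U.F k] =ᵐ[μ] urnX U.Y U.B k := by
  rw [natCast_eq_indicator (U.zeta_binary (k + 1))]
  simpa using U.zeta_cond (k + 1) (Nat.le_add_left 1 k)

abbrev pastAndDraw (k : ℕ) : MeasurableSpace Ω :=
  U.F k ⊔ MeasurableSpace.comap (U.ζ (k + 1)) inferInstance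

lemma pastAndDraw_le (k : ℕ) : U.pastAndDraw k ≤ m0 :=
  sup_le (U.F.le k) (U.measurable_draw k).comap_le

lemma integral_coin (hp : 0 ≤ p) (k : ℕ) : μ[fun ω => (U.ξ (k + 1) ω : ℝ)] = p := by
  have hmeas : MeasurableSet {ω | U.ξ (k + 1) ω = 1} :=
    U.xi_meas (k + 1) (measurableSet_singleton 1)
  rw [natCast_eq_indicator (U.xi_binary (k + 1)), integral_indicator_const _ hmeas,
    measureReal_def, U.xi_bernoulli (k + 1) (Nat.le_add_left 1 k), ENNReal.toReal_ofReal hp,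
    smul_eq_mul, mul_one]

lemma condExp_mul_coin [IsFiniteMeasure μ] (hp : 0 ≤ p) {k : ℕ} {f : Ω → ℝ}
    (hf : StronglyMeasurable[U.pastAndDraw k] f) (hfi : Integrable f μ) :
    μ[f * fun ω => (U.ξ (k + 1) ω : ℝ) | U.F k] =ᵐ[μ] fun ω => p * μ[f | U.F k] ω := by
  have hind : Indep (MeasurableSpace.comap (U.ξ (k + 1)) inferInstance) (U.pastAndDraw k) μ := by
    simpa using U.xi_indep (k + 1) (Nat.le_add_left 1 k)
  simpa only [U.integral_coin hp] using condExp_mul_of_indep le_sup_left (U.pastAndDraw_le k)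
    (U.xi_meas (k + 1)).comap_le hind hf (stronglyMeasurable_comap_natCast (U.ξ (k + 1)))
    (hfi.mul_natCast_of_le_one (U.xi_meas (k + 1)) (U.xi_binary (k + 1)))
    (integrable_natCast_of_le_one (U.xi_meas (k + 1)) (U.xi_binary (k + 1)))

def affineInDraw (φ ψ : ℕ → ℕ → ℝ) (k : ℕ) (ω : Ω) : ℝ :=
  φ (U.Y k ω) (U.B k ω) + ψ (U.Y k ω) (U.B k ω) * U.ζ (k + 1) ω

lemma stronglyMeasurable_affineInDraw (φ ψ : ℕ → ℕ → ℝ) (k : ℕ) :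
    StronglyMeasurable[U.pastAndDraw k] (U.affineInDraw φ ψ k) := by
  refine StronglyMeasurable.add ?_ (StronglyMeasurable.mul ?_ ?_)
  · exact (U.stronglyMeasurable_state φ k).mono le_sup_left
  · exact (U.stronglyMeasurable_state ψ k).mono le_sup_left
  · exact (stronglyMeasurable_comap_natCast (U.ζ (k + 1))).mono le_sup_right

lemma integrable_affineInDraw [IsFiniteMeasure μ] (φ ψ : ℕ → ℕ → ℝ) (k : ℕ) :
    Integrable (U.affineInDraw φ ψ k) μ :=
  (U.integrable_state φ k).add ((U.integrable_state ψ k).mul_natCast_of_le_one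
    (U.measurable_draw k) (U.zeta_binary (k + 1)))

lemma condExp_affineInDraw [IsFiniteMeasure μ] (φ ψ : ℕ → ℕ → ℝ) (k : ℕ) :
    μ[U.affineInDraw φ ψ k | U.F k] =ᵐ[μ]
      fun ω => φ (U.Y k ω) (U.B k ω) + ψ (U.Y k ω) (U.B k ω) * urnX U.Y U.B k ω := by
  filter_upwards [condExp_add_mul_of_stronglyMeasurable (U.F.le k)
    (U.stronglyMeasurable_state φ k) (U.stronglyMeasurable_state ψ k) (U.integrable_state φ k)
    ((U.integrable_state ψ k).mul_natCast_of_le_one (U.measurable_draw k)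
      (U.zeta_binary (k + 1)))
    (integrable_natCast_of_le_one (U.measurable_draw k) (U.zeta_binary (k + 1))),
    U.condExp_draw k] with ω h1 h2
  exact h1.trans (by rw [Pi.add_apply, Pi.mul_apply, h2])

lemma condExp_affineInDraw_add_mul_coin [IsFiniteMeasure μ] (hp : 0 ≤ p)
    (φ₁ ψ₁ φ₂ ψ₂ : ℕ → ℕ → ℝ) (k : ℕ) :
    μ[U.affineInDraw φ₁ ψ₁ k + U.affineInDraw φ₂ ψ₂ k * fun ω => (U.ξ (k + 1) ω : ℝ) | U.F k]
      =ᵐ[μ] fun ω => φ₁ (U.Y k ω) (U.B k ω) + ψ₁ (U.Y k ω) (U.B k ω) * urnX U.Y U.B k ω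
        + p * (φ₂ (U.Y k ω) (U.B k ω) + ψ₂ (U.Y k ω) (U.B k ω) * urnX U.Y U.B k ω) := by
  filter_upwards [condExp_add (U.integrable_affineInDraw φ₁ ψ₁ k)
      ((U.integrable_affineInDraw φ₂ ψ₂ k).mul_natCast_of_le_one (U.xi_meas (k + 1))
        (U.xi_binary (k + 1))) (U.F k),
    U.condExp_affineInDraw φ₁ ψ₁ k,
    U.condExp_mul_coin hp (U.stronglyMeasurable_affineInDraw φ₂ ψ₂ k)
      (U.integrable_affineInDraw φ₂ ψ₂ k),
    U.condExp_affineInDraw φ₂ ψ₂ k] with ω h1 h2 h3 h4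
  rw [h1, Pi.add_apply, h2, h3, h4]

lemma condExp_urnX_succ [IsFiniteMeasure μ] (hp : 0 ≤ p) (k : ℕ)
    (hpos : ∀ ω, 0 < U.total k ω) :
    μ[urnX U.Y U.B (k + 1) | U.F k] =ᵐ[μ] fun ω =>
      urnX U.Y U.B k ω + p * b * (1 - 2 * urnX U.Y U.B k ω) / ((U.total k ω : ℝ) + a + b) := by
  -- the proportion after a Pólya step, plus the correction when Friedman's scheme is used
  have hsplit : urnX U.Y U.B (k + 1) =
      U.affineInDraw (fun y z => y / (y + z + g)) (fun y z => g / (y + z + g)) k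
      + U.affineInDraw (fun y z => (y + b) / (y + z + a + b) - y / (y + z + g))
          (fun y z => (a - b) / (y + z + a + b) - g / (y + z + g)) k
        * fun ω => (U.ξ (k + 1) ω : ℝ) := by
    ext ω
    have := U.xi_binary (k + 1) ω
    rw [U.urnX_succ]
    interval_cases h : U.ξ (k + 1) ω <;> simp [affineInDraw, h] <;> ring
  rw [hsplit]
  refine (U.condExp_affineInDraw_add_mul_coin hp _ _ _ _ k).trans (.of_forall fun ω => ?_)
  have hs : (0 : ℝ) < U.Y k ω + U.B k ω := by exact_mod_cast hpos ω
  simp only [urnX, total]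
  push_cast
  field_simp
  ring

lemma abs_urnX_succ_sub_le (hY0 : 0 < Y0) (hb : 0 < b) (hg : 0 < g) (k : ℕ) (ω : Ω) :
    |urnX U.Y U.B (k + 1) ω - urnX U.Y U.B k ω| ≤ ((a : ℝ) + b + g) / (k + 1) := by
  have hs : (k : ℝ) + 1 ≤ U.Y k ω + U.B k ω := by
    have := U.add_le_total hb hg k ω
    exact_mod_cast (show k + 1 ≤ U.Y k ω + U.B k ω by simp only [total] at this; omega)
  have hζ0 : (0 : ℝ) ≤ U.ζ (k + 1) ω := Nat.cast_nonneg _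
  have hζ1 : (U.ζ (k + 1) ω : ℝ) ≤ 1 := by exact_mod_cast U.zeta_binary (k + 1) ω
  have ha0 : (0 : ℝ) ≤ a := Nat.cast_nonneg a
  have hb0 : (0 : ℝ) ≤ b := Nat.cast_nonneg b
  have hg0 : (0 : ℝ) ≤ g := Nat.cast_nonneg g
  obtain ⟨u, v, hu, huv, hv, hX⟩ : ∃ u v : ℝ, 0 ≤ u ∧ u ≤ v ∧ v ≤ a + b + g ∧
      urnX U.Y U.B (k + 1) ω = (U.Y k ω + u) / (U.Y k ω + U.B k ω + v) := by
    rw [U.urnX_succ]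
    split_ifs
    · exact ⟨b + (a - b) * U.ζ (k + 1) ω, a + b, by nlinarith, by nlinarith, by linarith,
        by ring_nf⟩
    · exact ⟨g * U.ζ (k + 1) ω, g, by positivity, by nlinarith, by linarith, by ring_nf⟩
  rw [hX]
  calc _ ≤ v / (U.Y k ω + U.B k ω) :=
        abs_div_add_sub_div_le (Nat.cast_nonneg _) (by linarith) (by linarith) hu huv
    _ ≤ ((a : ℝ) + b + g) / (k + 1) := div_le_div₀ (by positivity) hv (by positivity) hs

lemma condExp_sq_urnX_sub_half_succ_le [IsFiniteMeasure μ] (hY0 : 0 < Y0) (hb : 0 < b)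
    (hg : 0 < g) (hp : 0 ≤ p) (k : ℕ) :
    μ[fun ω => (urnX U.Y U.B (k + 1) ω - 1 / 2) ^ 2 | U.F k] ≤ᵐ[μ] fun ω =>
      (urnX U.Y U.B k ω - 1 / 2) ^ 2
        - 4 * p * b * ((urnX U.Y U.B k ω - 1 / 2) ^ 2 * ((U.total k ω : ℝ) + a + b)⁻¹)
        + (((a : ℝ) + b + g) / (k + 1)) ^ 2 := by
  have hpos (ω : Ω) : 0 < U.total k ω := by have := U.add_le_total hb hg k ω; omega
  refine (condExp_sub_sq_le (U.F.le k) (U.stronglyMeasurable_state (fun y z => y / (y + z)) k)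
    (U.integrable_state (fun y z => y / (y + z)) k)
    (U.integrable_state (fun y z => ((y : ℝ) / (y + z) - 1 / 2) ^ 2) k)
    (U.integrable_state (fun y z => (y : ℝ) / (y + z)) (k + 1)).1
    (U.abs_urnX_succ_sub_le hY0 hb hg k) (U.condExp_urnX_succ hp k hpos)).trans
    (.of_forall fun ω => le_of_eq ?_)
  unfold urnX
  ring

lemma ae_tendsto_sq_urnX_sub_half [IsFiniteMeasure μ] (hY0 : 0 < Y0) (hb : 0 < b)
    (hg : 0 < g) (hp : 0 < p) :
    ∀ᵐ ω ∂μ, Tendsto (fun n => (urnX U.Y U.B n ω - 1 / 2) ^ 2) atTop (𝓝 0) := by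
  have hc : Summable fun n : ℕ => (((a : ℝ) + b + g) / (n + 1)) ^ 2 := by
    refine (((summable_nat_add_iff 1).2 (Real.summable_one_div_nat_pow.2 one_lt_two)).mul_left
      (((a : ℝ) + b + g) ^ 2)).congr fun n => ?_
    rw [div_pow, mul_one_div, Nat.cast_add_one]
  set φV : ℕ → ℕ → ℝ := fun y z => ((y : ℝ) / (y + z) - 1 / 2) ^ 2
  set φD : ℕ → ℕ → ℝ := fun y z => 4 * p * b * (φV y z * (((y + z : ℕ) : ℝ) + a + b)⁻¹)
  filter_upwards [ae_tendsto_and_summable_of_condExp_le (ℱ := U.F)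
    (V := fun n ω => φV (U.Y n ω) (U.B n ω)) (D := fun n ω => φD (U.Y n ω) (U.B n ω))
    (U.stronglyMeasurable_state φV) (U.stronglyMeasurable_state φD)
    (U.integrable_state φV) (U.integrable_state φD)
    (fun n ω => sq_nonneg _) (fun n ω => by positivity) (fun n => by positivity) hc
    (U.condExp_sq_urnX_sub_half_succ_le hY0 hb hg hp.le)] with ω ⟨⟨l, hl⟩, hD⟩
  have hw : ¬ Summable fun n => ((U.total n ω : ℝ) + a + b)⁻¹ := by
    refine not_summable_inv_of_le_mul_succ (M := Y0 + B0 + a + b + g) (fun n => by positivity)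
      fun n => ?_
    have h : (U.total n ω : ℝ) ≤ Y0 + B0 + n * (a + b + g) := by exact_mod_cast U.total_le n ω
    have hn : (0 : ℝ) ≤ n := Nat.cast_nonneg n
    nlinarith [mul_nonneg hn (by positivity : (0 : ℝ) ≤ Y0 + B0)]
  rwa [eq_zero_of_tendsto_of_summable_mul hl (fun n => by positivity) hw
    ((summable_mul_left_iff (by positivity)).1 hD)] at hl

end MixedUrn

theorem friedman_vs_polya_general {Ω : Type*} [MeasurableSpace Ω] (μ : Measure Ω)
    [IsProbabilityMeasure μ] (Y0 B0 a b g : ℕ) (p : ℝ)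
    (hY0 : 0 < Y0) (hb : 0 < b) (hg : 0 < g)
    (hp : 0 < p) (U : MixedUrn μ Y0 B0 a b g p) :
    ∀ᵐ ω ∂μ, Tendsto (fun n => urnX U.Y U.B n ω) atTop (nhds (1 / 2)) := by
  filter_upwards [U.ae_tendsto_sq_urnX_sub_half hY0 hb hg hp] with ω h
  exact tendsto_of_tendsto_sub_sq_zero h

/-- For any positive integers `Y₀, B₀, α, β, γ` and any `p ∈ (0,1]`, the proportion of
yellow balls `X n` in the mixed Friedman–Pólya urn converges almost surely to `1/2`. -/
theorem friedman_vs_polya {Ω : Type*} [MeasurableSpace Ω] (μ : Measure Ω)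
    [IsProbabilityMeasure μ] (Y0 B0 a b g : ℕ) (p : ℝ)
    (hY0 : 0 < Y0) (hB0 : 0 < B0) (ha : 0 < a) (hb : 0 < b) (hg : 0 < g)
    (hp : 0 < p) (hp1 : p ≤ 1) (U : MixedUrn μ Y0 B0 a b g p) :
    ∀ᵐ ω ∂μ, Tendsto (fun n => urnX U.Y U.B n ω) atTop (nhds (1 / 2)) :=
  friedman_vs_polya_general μ Y0 B0 a b g p hY0 hb hg hp U
end

section
/- Let ℓ : [0,1] → [0,1] be an affine map ℓ(x) = a x + b whose slope a satisfies |a| < 1 and whose unique fixed point is 1/2. If (x_n)_{n≥0} is a sequence in [0,1] such that limsup_n x_n = limsup_n ℓ(x_{n-1}) and liminf_n x_n = liminf_n ℓ(x_{n-1}), then x_n → 1/2 as n → ∞. -/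
open Filter

/-- Deterministic lemma: if `ℓ x = a x + b` is affine with `|a| < 1`, maps `[0,1]`
into `[0,1]` and has `1/2` as its (unique) fixed point, and `(x_n)` is a sequence in
`[0,1]` with `limsup x n = limsup ℓ (x (n-1))` and `liminf x n = liminf ℓ (x (n-1))`,
then `x n → 1/2`. -/
theorem affine_limsup_fixed_point (a b : ℝ) (ℓ : ℝ → ℝ)
    (hℓ : ∀ x, ℓ x = a * x + b) (hslope : |a| < 1)
    (hmaps : ∀ x ∈ Set.Icc (0 : ℝ) 1, ℓ x ∈ Set.Icc (0 : ℝ) 1)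
    (hfix : ℓ (1 / 2) = 1 / 2)
    (x : ℕ → ℝ) (hx : ∀ n, x n ∈ Set.Icc (0 : ℝ) 1)
    (hsup : limsup x atTop = limsup (fun n => ℓ (x (n - 1))) atTop)
    (hinf : liminf x atTop = liminf (fun n => ℓ (x (n - 1))) atTop) :
    Tendsto x atTop (nhds (1 / 2)) := by
  obtain ⟨ha1, ha2⟩ := abs_lt.mp hslope
  -- boundedness
  have hbd : IsBoundedUnder (· ≤ ·) atTop x := isBoundedUnder_of ⟨1, fun n => (hx n).2⟩
  have hbd' : IsBoundedUnder (· ≥ ·) atTop x := isBoundedUnder_of ⟨0, fun n => (hx n).1⟩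
  have hcobd : IsCoboundedUnder (· ≤ ·) atTop x := hbd'.isCoboundedUnder_le
  have hcobd' : IsCoboundedUnder (· ≥ ·) atTop x := hbd.isCoboundedUnder_ge
  -- the shift doesn't change limsup/liminf
  have hshift_sup : limsup (fun n => ℓ (x (n - 1))) atTop = limsup (fun n => ℓ (x n)) atTop := by
    have : (fun n : ℕ => ℓ (x (n - 1))) = (fun n => ℓ (x n)) ∘ (fun n => n - 1) := rfl
    rw [this]
    simp only [limsup, limsup_eq]
    rw [← Filter.map_map, map_sub_atTop_eq_nat 1]
  have hshift_inf : liminf (fun n => ℓ (x (n - 1))) atTop = liminf (fun n => ℓ (x n)) atTop := by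
    have : (fun n : ℕ => ℓ (x (n - 1))) = (fun n => ℓ (x n)) ∘ (fun n => n - 1) := rfl
    rw [this]
    simp only [liminf, liminf_eq]
    rw [← Filter.map_map, map_sub_atTop_eq_nat 1]
  have hcont : ∀ y : ℝ, ContinuousAt ℓ y := by
    intro y
    have : ℓ = fun z => a * z + b := funext hℓ
    rw [this]
    fun_prop
  have hfix' : a * (1/2) + b = 1/2 := by rw [← hℓ]; exact hfix
  have key : limsup x atTop = 1/2 ∧ liminf x atTop = 1/2 := by
    rcases le_or_gt 0 a with hpos | hneg
    · -- monotone case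
      have hmono : Monotone ℓ := by
        intro u v huv
        rw [hℓ, hℓ]
        have := mul_le_mul_of_nonneg_left huv hpos
        linarith
      have h1 : ℓ (limsup x atTop) = limsup (fun n => ℓ (x n)) atTop :=
        hmono.map_limsup_of_continuousAt x (hcont _) hbd hcobd
      have h2 : ℓ (liminf x atTop) = liminf (fun n => ℓ (x n)) atTop :=
        hmono.map_liminf_of_continuousAt x (hcont _) hcobd' hbd'
      have hSeq : limsup x atTop = ℓ (limsup x atTop) :=
        (hsup.trans hshift_sup).trans h1.symm
      have hIeq : liminf x atTop = ℓ (liminf x atTop) :=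
        (hinf.trans hshift_inf).trans h2.symm
      rw [hℓ] at hSeq hIeq
      constructor <;> nlinarith
    · -- antitone case
      have hanti : Antitone ℓ := by
        intro u v huv
        rw [hℓ, hℓ]
        nlinarith
      have h1 : ℓ (liminf x atTop) = limsup (fun n => ℓ (x n)) atTop :=
        hanti.map_liminf_of_continuousAt x (hcont _) hcobd' hbd'
      have h2 : ℓ (limsup x atTop) = liminf (fun n => ℓ (x n)) atTop :=
        hanti.map_limsup_of_continuousAt x (hcont _) hbd hcobd
      have hSeq : limsup x atTop = ℓ (liminf x atTop) :=
        (hsup.trans hshift_sup).trans h1.symm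
      have hIeq : liminf x atTop = ℓ (limsup x atTop) :=
        (hinf.trans hshift_inf).trans h2.symm
      rw [hℓ] at hSeq hIeq
      have hSI : limsup x atTop = liminf x atTop := by nlinarith
      constructor <;> nlinarith
  exact tendsto_of_liminf_eq_limsup (key.2) (key.1) hbd hbd'
end

section
/- Let θ < 0 and let ℓ(x) = (θx + c)/d with d > 0, |θ| < d, c ≥ 0, ℓ mapping [0,1] into [0,1] with fixed point 1/2. Let c' = d − c, so that the map z ↦ (−θz + c')/d is increasing, maps [0,1] to [0,1], and has fixed point 1/2. Suppose (x_n)_{n≥0} and (z_n)_{n≥0} are sequences in [0,1] with z_n = 1 − x_n such that for all x, z ∈ [0,1]: if limsup_n x_n ≤ x then limsup_n z_n ≤ (−θx + c')/d, and if limsup_n z_n ≤ z then limsup_n x_n ≤ (−θz + c')/d. Then limsup_n x_n ≤ 1/2 and limsup_n z_n ≤ 1/2, and consequently x_n → 1/2. -/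
open Filter

/-- Case 2 (`θ < 0`) two-colour iteration argument: let `ℓ x = (θ x + c)/d` with
`θ < 0 < d`, `|θ| < d`, `c ≥ 0`, mapping `[0,1]` into `[0,1]` with fixed point `1/2`,
and set `c' = d - c` (so that `z ↦ (-θ z + c')/d` also fixes `1/2`). If `(x_n)` and
`(z_n)` are sequences in `[0,1]` with `z_n = 1 - x_n` satisfying the two cross
limsup bounds, then `limsup x_n ≤ 1/2`, `limsup z_n ≤ 1/2`, and `x_n → 1/2`. -/
theorem case_theta_neg_limsup (θ c d : ℝ) (hθ : θ < 0) (hd : 0 < d) (habs : |θ| < d)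
    (hc : 0 ≤ c)
    (ℓ : ℝ → ℝ) (hℓ : ∀ x, ℓ x = (θ * x + c) / d)
    (hmaps : ∀ x ∈ Set.Icc (0 : ℝ) 1, ℓ x ∈ Set.Icc (0 : ℝ) 1)
    (hfix : ℓ (1 / 2) = 1 / 2)
    (c' : ℝ) (hc' : c' = d - c)
    (x z : ℕ → ℝ) (hx : ∀ n, x n ∈ Set.Icc (0 : ℝ) 1) (hz : ∀ n, z n = 1 - x n)
    (hxz : ∀ y ∈ Set.Icc (0 : ℝ) 1,
      limsup x atTop ≤ y → limsup z atTop ≤ (-θ * y + c') / d)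
    (hzx : ∀ y ∈ Set.Icc (0 : ℝ) 1,
      limsup z atTop ≤ y → limsup x atTop ≤ (-θ * y + c') / d) :
    limsup x atTop ≤ 1 / 2 ∧ limsup z atTop ≤ 1 / 2
      ∧ Tendsto x atTop (nhds (1 / 2)) := by
  set r : ℝ := -θ / d with hr
  have hr0 : 0 < r := div_pos (neg_pos.2 hθ) hd
  have hr1 : r < 1 := by
    rw [div_lt_one hd]
    have := abs_lt.1 habs
    linarith [neg_abs_le θ, le_abs_self θ]
  -- from the fixed point, determine c
  have hcval : c = (d - θ) / 2 := by
    have := hfix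
    rw [hℓ, div_eq_iff hd.ne'] at this
    linarith
  -- the iteration formula
  have key : ∀ t : ℝ, (-θ * (1 / 2 + t) + c') / d = 1 / 2 + r * t := by
    intro t
    rw [hc', hcval, hr]
    field_simp
    ring
  have hrpow01 : ∀ k : ℕ, (1 / 2 + r ^ k / 2) ∈ Set.Icc (0 : ℝ) 1 := by
    intro k
    have h1 : r ^ k ≤ 1 := pow_le_one₀ hr0.le hr1.le
    have h2 : 0 ≤ r ^ k := pow_nonneg hr0.le k
    exact Set.mem_Icc.2 ⟨by linarith, by linarith⟩
  -- boundedness facts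
  have hxb : IsBoundedUnder (· ≤ ·) atTop x :=
    ⟨1, eventually_map.2 (Eventually.of_forall fun n => (hx n).2)⟩
  have hxb' : IsBoundedUnder (· ≥ ·) atTop x :=
    ⟨0, eventually_map.2 (Eventually.of_forall fun n => (hx n).1)⟩
  have hzb : IsBoundedUnder (· ≤ ·) atTop z :=
    ⟨1, eventually_map.2 (Eventually.of_forall fun n => by rw [hz n]; linarith [(hx n).1])⟩
  have hzb' : IsBoundedUnder (· ≥ ·) atTop z :=
    ⟨0, eventually_map.2 (Eventually.of_forall fun n => by rw [hz n]; linarith [(hx n).2])⟩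
  -- the main induction
  have main : ∀ n : ℕ, limsup x atTop ≤ 1 / 2 + r ^ (2 * n) / 2 ∧
      limsup z atTop ≤ 1 / 2 + r ^ (2 * n + 1) / 2 := by
    intro n
    induction n with
    | zero =>
      have hx1 : limsup x atTop ≤ 1 :=
        limsup_le_of_le hxb'.isCoboundedUnder_le
          (eventually_map.2 (Eventually.of_forall fun n => (hx n).2))
      have hx1' : limsup x atTop ≤ 1 / 2 + r ^ (2 * 0) / 2 := by
        rw [Nat.mul_zero, pow_zero]; linarith
      refine ⟨hx1', ?_⟩
      have := hxz _ (hrpow01 0) (by rw [pow_zero]; linarith)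
      rw [key] at this
      calc limsup z atTop ≤ 1 / 2 + r * (r ^ 0 / 2) := this
        _ = 1 / 2 + r ^ (2 * 0 + 1) / 2 := by ring
    | succ n ih =>
      have h1 := hzx _ (hrpow01 (2 * n + 1)) ih.2
      rw [key] at h1
      have hx' : limsup x atTop ≤ 1 / 2 + r ^ (2 * (n + 1)) / 2 := by
        calc limsup x atTop ≤ 1 / 2 + r * (r ^ (2 * n + 1) / 2) := h1
          _ = 1 / 2 + r ^ (2 * (n + 1)) / 2 := by ring
      refine ⟨hx', ?_⟩
      have h2 := hxz _ (hrpow01 (2 * (n + 1))) hx'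
      rw [key] at h2
      calc limsup z atTop ≤ 1 / 2 + r * (r ^ (2 * (n + 1)) / 2) := h2
        _ = 1 / 2 + r ^ (2 * (n + 1) + 1) / 2 := by ring
  have hrtend : Tendsto (fun k : ℕ => r ^ k) atTop (nhds 0) :=
    tendsto_pow_atTop_nhds_zero_of_lt_one hr0.le hr1
  have hlimx : limsup x atTop ≤ 1 / 2 := by
    have : Tendsto (fun n : ℕ => 1 / 2 + r ^ (2 * n) / 2) atTop (nhds (1 / 2)) := by
      have h2 : Tendsto (fun n : ℕ => 2 * n) atTop atTop :=
        tendsto_atTop_mono (fun n => by simp; omega) tendsto_id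
      have := (hrtend.comp h2).div_const 2
      simpa using (tendsto_const_nhds.add this)
    exact ge_of_tendsto' this fun n => (main n).1
  have hlimz : limsup z atTop ≤ 1 / 2 := by
    have : Tendsto (fun n : ℕ => 1 / 2 + r ^ (2 * n + 1) / 2) atTop (nhds (1 / 2)) := by
      have h2 : Tendsto (fun n : ℕ => 2 * n + 1) atTop atTop :=
        tendsto_atTop_mono (fun n => by simp; omega) tendsto_id
      have := (hrtend.comp h2).div_const 2
      simpa using (tendsto_const_nhds.add this)
    exact ge_of_tendsto' this fun n => (main n).2
  refine ⟨hlimx, hlimz, ?_⟩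
  have hcobz : IsCoboundedUnder (· ≤ ·) atTop z := hzb'.isCoboundedUnder_le
  have hliminf : 1 / 2 ≤ liminf x atTop := by
    have heq : liminf x atTop = 1 - limsup z atTop := by
      have : (fun n => 1 - z n) = x := by
        funext n; rw [hz n]; ring
      rw [← this]
      exact liminf_const_sub atTop z 1 hzb hcobz
    rw [heq]; linarith
  exact tendsto_of_liminf_eq_limsup
    (le_antisymm (liminf_le_limsup hxb hxb' |>.trans hlimx) hliminf)
    (le_antisymm hlimx (hliminf.trans (liminf_le_limsup hxb hxb'))) hxb hxb'
end
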